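/- arXiv:1511.00820 — 4 statements merged into one kernel-verified Lean document; each statement's English description precedes it below -/
import Mathlib

section
/- Let B, W ⊆ ℝ^d be finite nonempty sets and u ∈ ℝ^d. Then Σ_{S ⊆ B} (−1)^{|S|} h((S ∪ W)ˇ, u) = −( −h(B ⊕ W̌, u) )⁺, where the sum runs over all subsets S of B (for S = ∅ the summand is h(W̌,u)). Equivalently, Σ_{S ⊆ B} (−1)^{|S|} max_{x ∈ S∪W} ⟨−x,u⟩ = −max(0, min_{w∈W} ⟨w,u⟩ − max_{b∈B} ⟨b,u⟩). -/
/-!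
Write `c = min_{w ∈ W} ⟨w, u⟩`. Since `h((S ∪ W)ˇ, u) = -min_{x ∈ S ∪ W} ⟨x, u⟩`, the sum is minus an
alternating sum of minima over `S ∪ W`. Splitting the subsets of `B` according to whether they
contain a fixed `a ∈ B`, the subsets containing `a` contribute minus the same sum with `W` replaced
by `W ∪ {a}`. Induction on `B` then gives the closed form `c - max_{b ∈ B} min(⟨b, u⟩, c)`, and
`c - min(max_B ⟨b, u⟩, c) = (c - max_B ⟨b, u⟩)⁺`.
-/

namespace Finset

lemma sup'_neg_eq_neg_inf' {ι α : Type*} [AddGroup α] [Lattice α] [AddLeftMono α]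
    [AddRightMono α] (s : Finset ι) (hs : s.Nonempty) (f : ι → α) :
    s.sup' hs (fun i => -f i) = -s.inf' hs f :=
  (map_finset_inf' (OrderIso.neg α) hs f).symm

lemma sum_powerset_neg_one_pow_card_mul_inf'_union {ι R : Type*} [DecidableEq ι] [CommRing R]
    [LinearOrder R] (g : ι → R) {B W : Finset ι} (hB : B.Nonempty) (hW : W.Nonempty) :
    ∑ S ∈ B.powerset, (-1 : R) ^ S.card * (S ∪ W).inf' (hW.mono subset_union_right) g =
      W.inf' hW g - B.sup' hB fun b => min (g b) (W.inf' hW g) := by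
  induction hB using Nonempty.cons_induction generalizing W with
  | singleton a =>
    rw [show ({a} : Finset ι).powerset = {∅, {a}} from rfl, sum_pair (singleton_ne_empty a).symm]
    simp [inf'_insert (H := hW), sub_eq_add_neg]
  | cons a B' ha hB' ih =>
    have h_insert : ∀ S ∈ B'.powerset,
        (-1 : R) ^ (insert a S).card * (insert a S ∪ W).inf' (hW.mono subset_union_right) g =
          -((-1 : R) ^ S.card *
            (S ∪ insert a W).inf' ((W.insert_nonempty a).mono subset_union_right) g) := by
      intro S hS
      have haS : a ∉ S := fun h => ha (mem_powerset.mp hS h)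
      rw [card_insert_of_notMem haS, pow_succ]
      simp only [insert_union, union_insert]
      ring
    simp only [cons_eq_insert]
    rw [sum_powerset_insert ha, sum_congr rfl h_insert, sum_neg_distrib, ih hW,
      ih (W.insert_nonempty a), sup'_insert (H := hB'), inf'_insert (H := hW)]
    set c := W.inf' hW g
    set m := B'.sup' hB' fun b => min (g b) c
    have hm : m ≤ c := sup'_le _ _ fun b _ => min_le_right _ _
    have h_inner : (B'.sup' hB' fun b => min (g b) (min (g a) c)) = min m (g a) := by
      rw [sup'_inf_distrib_right]
      exact sup'_congr hB' rfl fun b _ => by ac_rfl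
    have h_cap : min m (g a) = min m (min (g a) c) := by
      rw [min_left_comm, min_eq_left hm, min_comm]
    rw [h_inner, h_cap, max_comm]
    linear_combination min_add_max m (min (g a) c)

end Finset

/-- First-order combinatorial identity for hit-and-miss probabilities:
`∑_{S ⊆ B} (−1)^{|S|} h((S ∪ W)ˇ, u) = −(−h(B ⊕ W̌, u))⁺`, i.e.
`∑_{S ⊆ B} (−1)^{|S|} max_{x∈S∪W} ⟨−x,u⟩
  = −max(0, min_{w∈W} ⟨w,u⟩ − max_{b∈B} ⟨b,u⟩)`. -/
theorem hit_and_miss_first_order_identity (d : ℕ)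
    [DecidableEq (EuclideanSpace ℝ (Fin d))]
    (B W : Finset (EuclideanSpace ℝ (Fin d))) (hB : B.Nonempty) (hW : W.Nonempty)
    (u : EuclideanSpace ℝ (Fin d)) :
    (∑ S ∈ B.powerset,
        (-1 : ℝ) ^ S.card *
          (S ∪ W).sup' (hW.mono Finset.subset_union_right)
            (fun x => -(inner ℝ x u : ℝ))) =
      -max 0 (W.inf' hW (fun w => (inner ℝ w u : ℝ)) -
        B.sup' hB (fun b => (inner ℝ b u : ℝ))) := by
  set c := W.inf' hW fun w => (inner ℝ w u : ℝ)
  calc _ = -∑ S ∈ B.powerset, (-1 : ℝ) ^ S.card *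
          (S ∪ W).inf' (hW.mono Finset.subset_union_right) (fun x => (inner ℝ x u : ℝ)) := by
        rw [← Finset.sum_neg_distrib]
        exact Finset.sum_congr rfl fun S _ => by rw [Finset.sup'_neg_eq_neg_inf']; ring
    _ = -(c - min (B.sup' hB fun b => (inner ℝ b u : ℝ)) c) := by
        rw [Finset.sum_powerset_neg_one_pow_card_mul_inf'_union _ hB hW,
          ← Finset.sup'_inf_distrib_right]
    _ = _ := by rw [← max_sub_sub_left, sub_self, max_comm]
end

section
/- Let B ⊆ ℝ^d be a finite nonempty set, u ∈ ℝ^d, and q : ℝ^d → ℝ an arbitrary function. Then Σ_{∅ ≠ S ⊆ B} (−1)^{|S|+1} m_q(S) = M_q(B), where the sum runs over all nonempty subsets S of B. In words: the alternating sum over nonempty subsets S of B of the minimum of q over the ⟨·,u⟩-minimizers of S equals the maximum of q over the ⟨·,u⟩-maximizers of B. -/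
/-- `minOnMinimizers u q P hP` is
`m_q(P) = min{ q(p) : p ∈ P, ⟨p,u⟩ = min_{p'∈P} ⟨p',u⟩ }`,
the minimum of `q` over the `⟨·,u⟩`-minimizers of the finite nonempty set `P`. -/
noncomputable def minOnMinimizers {d : ℕ} (u : EuclideanSpace ℝ (Fin d))
    (q : EuclideanSpace ℝ (Fin d) → ℝ)
    (P : Finset (EuclideanSpace ℝ (Fin d))) (hP : P.Nonempty) : ℝ :=
  (P.filter (fun p =>
      (inner ℝ p u : ℝ) = P.inf' hP (fun p' => (inner ℝ p' u : ℝ)))).inf'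
    (by
      obtain ⟨b, hb, hbe⟩ := P.exists_mem_eq_inf' hP (fun p' => (inner ℝ p' u : ℝ))
      exact ⟨b, Finset.mem_filter.2 ⟨hb, hbe.symm⟩⟩) q

/-- `maxOnMaximizers u q P hP` is
`M_q(P) = max{ q(p) : p ∈ P, ⟨p,u⟩ = max_{p'∈P} ⟨p',u⟩ }`,
the maximum of `q` over the `⟨·,u⟩`-maximizers of the finite nonempty set `P`. -/
noncomputable def maxOnMaximizers {d : ℕ} (u : EuclideanSpace ℝ (Fin d))
    (q : EuclideanSpace ℝ (Fin d) → ℝ)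
    (P : Finset (EuclideanSpace ℝ (Fin d))) (hP : P.Nonempty) : ℝ :=
  (P.filter (fun p =>
      (inner ℝ p u : ℝ) = P.sup' hP (fun p' => (inner ℝ p' u : ℝ)))).sup'
    (by
      obtain ⟨b, hb, hbe⟩ := P.exists_mem_eq_sup' hP (fun p' => (inner ℝ p' u : ℝ))
      exact ⟨b, Finset.mem_filter.2 ⟨hb, hbe.symm⟩⟩) q

/-!
Order the points lexicographically by the key `p ↦ (⟪p, u⟫, q p)`. The least key on `S` is then
`(min ⟪·, u⟫, m_q(S))` and the greatest key on `B` is `(max ⟪·, u⟫, M_q(B))`, so the theorem is the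
max–min inclusion–exclusion identity `∑_{∅ ≠ S ⊆ B} (-1)^{|S|+1} g(min_S f) = g(max_B f)`, valid for
any map `f` into a linear order and any `g`. That identity follows by induction on `B`, removing an
element `a` at which `f` is least: the subsets containing `a` contribute
`g (f a) · ∑_{T ⊆ B \ {a}} (-1)^{|T|}`, which vanishes unless `B = {a}`.
-/

open Finset

theorem Finset.Nonempty.filter_eq_inf' {ι α : Type*} [LinearOrder α] {s : Finset ι}
    (hs : s.Nonempty) (f : ι → α) : (s.filter fun i => f i = s.inf' hs f).Nonempty :=
  let ⟨i, hi, hfi⟩ := exists_mem_eq_inf' hs f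
  ⟨i, mem_filter.2 ⟨hi, hfi.symm⟩⟩

theorem Finset.Nonempty.filter_eq_sup' {ι α : Type*} [LinearOrder α] {s : Finset ι}
    (hs : s.Nonempty) (f : ι → α) : (s.filter fun i => f i = s.sup' hs f).Nonempty :=
  let ⟨i, hi, hfi⟩ := exists_mem_eq_sup' hs f
  ⟨i, mem_filter.2 ⟨hi, hfi.symm⟩⟩

theorem Finset.inf'_toLex {ι α β : Type*} [LinearOrder α] [LinearOrder β] (s : Finset ι)
    (hs : s.Nonempty) (f : ι → α) (g : ι → β) :
    s.inf' hs (fun i => toLex (f i, g i)) =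
      toLex (s.inf' hs f, (s.filter fun i => f i = s.inf' hs f).inf' (hs.filter_eq_inf' f) g) := by
  apply le_antisymm
  · obtain ⟨i, hi, hgi⟩ := exists_mem_eq_inf' (hs.filter_eq_inf' f) g
    obtain ⟨his, hfi⟩ := mem_filter.1 hi
    exact (inf'_le _ his).trans_eq (by rw [hfi, hgi])
  · refine le_inf' _ _ fun i hi => Prod.Lex.toLex_le_toLex.2 ?_
    rcases (inf'_le f hi).lt_or_eq with hlt | heq
    · exact .inl hlt
    · exact .inr ⟨heq, inf'_le g (mem_filter.2 ⟨hi, heq.symm⟩)⟩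

theorem Finset.sup'_toLex {ι α β : Type*} [LinearOrder α] [LinearOrder β] (s : Finset ι)
    (hs : s.Nonempty) (f : ι → α) (g : ι → β) :
    s.sup' hs (fun i => toLex (f i, g i)) =
      toLex (s.sup' hs f, (s.filter fun i => f i = s.sup' hs f).sup' (hs.filter_eq_sup' f) g) := by
  apply le_antisymm
  · refine sup'_le _ _ fun i hi => Prod.Lex.toLex_le_toLex.2 ?_
    rcases (le_sup' f hi).lt_or_eq with hlt | heq
    · exact .inl hlt
    · exact .inr ⟨heq, le_sup' g (mem_filter.2 ⟨hi, heq⟩)⟩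
  · obtain ⟨i, hi, hgi⟩ := exists_mem_eq_sup' (hs.filter_eq_sup' f) g
    obtain ⟨his, hfi⟩ := mem_filter.1 hi
    exact (le_sup' _ his).trans_eq' (by rw [hfi, hgi])

theorem Finset.sum_powerset_neg_one_pow_mul_comp_inf' {ι β R : Type*} [LinearOrder β] [Ring R]
    (f : ι → β) (g : β → R) (B : Finset ι) (hB : B.Nonempty) :
    (∑ S ∈ B.powerset,
        if hS : S.Nonempty then (-1 : R) ^ (#S + 1) * g (S.inf' hS f) else 0) =
      g (B.sup' hB f) := by
  classical
  induction B using Finset.induction_on_min_value f with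
  | empty => exact absurd hB not_nonempty_empty
  | insert a s has ha_le ih =>
    have hterm : ∀ S ∈ s.powerset, (if hS : (insert a S).Nonempty then
        (-1 : R) ^ (#(insert a S) + 1) * g ((insert a S).inf' hS f) else 0) =
        (-1 : R) ^ #S * g (f a) := by
      intro S hS
      have hSs := mem_powerset.1 hS
      have hinf : (insert a S).inf' (insert_nonempty a S) f = f a :=
        le_antisymm (inf'_le f (mem_insert_self a S))
          (le_inf' _ _ fun x hx => (mem_insert.1 hx).elim (fun h => h ▸ le_rfl)
            fun hx => ha_le x (hSs hx))
      rw [dif_pos (insert_nonempty a S), hinf, card_insert_of_notMem (fun h => has (hSs h))]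
      simp [pow_succ]
    rw [sum_powerset_insert has, sum_congr rfl hterm, ← sum_mul]
    rcases s.eq_empty_or_nonempty with rfl | hs
    · simp
    · have halt : ∑ S ∈ s.powerset, (-1 : R) ^ #S = 0 := by
        simpa using congrArg (Int.cast (R := R)) (sum_powerset_neg_one_pow_card_of_nonempty hs)
      obtain ⟨x, hx⟩ := id hs
      rw [ih hs, halt, zero_mul, add_zero, sup'_insert (H := hs),
        sup_eq_right.2 (le_sup'_of_le f hx (ha_le x hx))]

/-- Alternating-sum identity: `∑_{∅ ≠ S ⊆ B} (−1)^{|S|+1} m_q(S) = M_q(B)`. -/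
theorem alternating_sum_minOnMinimizers (d : ℕ)
    (B : Finset (EuclideanSpace ℝ (Fin d))) (hB : B.Nonempty)
    (u : EuclideanSpace ℝ (Fin d)) (q : EuclideanSpace ℝ (Fin d) → ℝ) :
    (∑ S ∈ B.powerset,
        if hS : S.Nonempty then
          (-1 : ℝ) ^ (S.card + 1) * minOnMinimizers u q S hS
        else 0) =
      maxOnMaximizers u q B hB := by
  let key (p : EuclideanSpace ℝ (Fin d)) : ℝ ×ₗ ℝ := toLex (inner ℝ p u, q p)
  have hmin (S) (hS : S.Nonempty) : minOnMinimizers u q S hS = (ofLex (S.inf' hS key)).2 := by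
    rw [minOnMinimizers, inf'_toLex]; rfl
  have hmax : maxOnMaximizers u q B hB = (ofLex (B.sup' hB key)).2 := by
    rw [maxOnMaximizers, sup'_toLex]; rfl
  simp_rw [hmin, hmax]
  exact sum_powerset_neg_one_pow_mul_comp_inf' key (fun x => (ofLex x).2) B hB
end

section
/- Let B, W ⊆ ℝ^d be finite nonempty sets, u ∈ ℝ^d, and q : ℝ^d → ℝ an arbitrary function. Let B₁ = { b ∈ B : ⟨b,u⟩ = max_{b'∈B} ⟨b',u⟩ } be the set of ⟨·,u⟩-maximizers of B. Then Σ_{S ⊆ B} (−1)^{|S|} m_q(S ∪ W) = Σ_{S ⊆ B₁} (−1)^{|S|} m_q(S ∪ W), where both sums run over all (possibly empty) subsets and for S = ∅ the summand is m_q(W). -/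
namespace Finset

variable {α M : Type*} [DecidableEq α] [AddCommMonoid M]

theorem sum_powerset_eq_sum_powerset_of_add_insert_eq_zero {A B : Finset α} (hAB : A ⊆ B)
    {x : α} (hx : x ∈ A) (f : Finset α → M)
    (hf : ∀ S ⊆ B, x ∉ S → ¬S ⊆ A → f S + f (insert x S) = 0) :
    ∑ S ∈ B.powerset, f S = ∑ S ∈ A.powerset, f S := by
  rw [← insert_erase hx, ← insert_erase (hAB hx), sum_powerset_insert (notMem_erase x B),
    sum_powerset_insert (notMem_erase x A), ← sum_add_distrib, ← sum_add_distrib]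
  refine (sum_subset (powerset_mono.2 (erase_subset_erase x hAB)) ?_).symm
  intro S hSB hSA
  rw [mem_powerset, subset_erase] at hSB
  refine hf S hSB.1 hSB.2 fun hS => hSA ?_
  rw [mem_powerset, subset_erase]
  exact ⟨hS, hSB.2⟩

end Finset

theorem minOnMinimizers_insert_of_inner_lt {d : ℕ} [DecidableEq (EuclideanSpace ℝ (Fin d))]
    (u : EuclideanSpace ℝ (Fin d)) (q : EuclideanSpace ℝ (Fin d) → ℝ)
    {P : Finset (EuclideanSpace ℝ (Fin d))} (hP : P.Nonempty)
    {x p : EuclideanSpace ℝ (Fin d)} (hp : p ∈ P) (hpx : inner ℝ p u < inner ℝ x u) :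
    minOnMinimizers u q (insert x P) (hP.mono (P.subset_insert x)) =
      minOnMinimizers u q P hP := by
  have hlt : P.inf' hP (fun p' => inner ℝ p' u) < inner ℝ x u :=
    (Finset.inf'_le _ hp).trans_lt hpx
  have hinf : (insert x P).inf' (hP.mono (P.subset_insert x)) (fun p' => inner ℝ p' u) =
      P.inf' hP (fun p' => inner ℝ p' u) := by
    rw [Finset.inf'_insert (H := hP)]
    exact inf_eq_right.2 hlt.le
  refine Finset.inf'_congr _ ?_ fun _ _ => rfl
  simp only [hinf, Finset.filter_insert, if_neg hlt.ne']

/-- In the alternating sum `∑_{S ⊆ B} (−1)^{|S|} m_q(S ∪ W)`, only the subsets of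
the set `B₁` of `⟨·,u⟩`-maximizers of `B` contribute. -/
theorem alternating_sum_reduces_to_maximizers (d : ℕ)
    [DecidableEq (EuclideanSpace ℝ (Fin d))]
    (B W : Finset (EuclideanSpace ℝ (Fin d))) (hB : B.Nonempty) (hW : W.Nonempty)
    (u : EuclideanSpace ℝ (Fin d)) (q : EuclideanSpace ℝ (Fin d) → ℝ) :
    (∑ S ∈ B.powerset,
        (-1 : ℝ) ^ S.card *
          minOnMinimizers u q (S ∪ W) (hW.mono Finset.subset_union_right)) =
      ∑ S ∈ (B.filter (fun b =>
          (inner ℝ b u : ℝ) = B.sup' hB (fun b' => (inner ℝ b' u : ℝ)))).powerset,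
        (-1 : ℝ) ^ S.card *
          minOnMinimizers u q (S ∪ W) (hW.mono Finset.subset_union_right) := by
  obtain ⟨x₀, hx₀B, hx₀⟩ := B.exists_mem_eq_sup' hB (fun b' => inner ℝ b' u)
  refine Finset.sum_powerset_eq_sum_powerset_of_add_insert_eq_zero (Finset.filter_subset _ _)
    (Finset.mem_filter.2 ⟨hx₀B, hx₀.symm⟩) _ fun S hSB hx₀S hSB₁ => ?_
  obtain ⟨b, hbS, hbB₁⟩ := Finset.not_subset.1 hSB₁
  have hb_lt : inner ℝ b u < inner ℝ x₀ u :=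
    hx₀ ▸ (Finset.le_sup' (fun b' => inner ℝ b' u) (hSB hbS)).lt_of_ne
      fun h => hbB₁ (Finset.mem_filter.2 ⟨hSB hbS, h⟩)
  have hm := minOnMinimizers_insert_of_inner_lt u q (hW.mono Finset.subset_union_right)
    (Finset.mem_union_left W hbS) hb_lt
  simp only [Finset.insert_union, hm, Finset.card_insert_of_notMem hx₀S, pow_succ]
  ring
end

section
/- Let B, W ⊆ ℝ^d be finite nonempty sets, u ∈ ℝ^d, and q : ℝ^d → ℝ an arbitrary function. Then the alternating sum Σ_{S ⊆ B} (−1)^{|S|} m_q(S ∪ W), taken over all (possibly empty) subsets S of B (with summand m_q(W) for S = ∅), equals: (i) m_q(W) − M_q(B) if max_{b∈B} ⟨b,u⟩ < min_{w∈W} ⟨w,u⟩; (ii) 0 if max_{b∈B} ⟨b,u⟩ > min_{w∈W} ⟨w,u⟩; (iii) ( m_q(W) − M_q(B) )⁺ = max(0, m_q(W) − M_q(B)) if max_{b∈B} ⟨b,u⟩ = min_{w∈W} ⟨w,u⟩. -/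
open Finset

namespace Finset

variable {γ α β : Type*}

theorem filter_eq_inf'_nonempty [LinearOrder α] (s : Finset γ) (hs : s.Nonempty) (g : γ → α) :
    (s.filter fun p => g p = s.inf' hs g).Nonempty :=
  let ⟨p, hp, hgp⟩ := s.exists_mem_eq_inf' hs g
  ⟨p, mem_filter.2 ⟨hp, hgp.symm⟩⟩

theorem filter_eq_sup'_nonempty [LinearOrder α] (s : Finset γ) (hs : s.Nonempty) (g : γ → α) :
    (s.filter fun p => g p = s.sup' hs g).Nonempty :=
  let ⟨p, hp, hgp⟩ := s.exists_mem_eq_sup' hs g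
  ⟨p, mem_filter.2 ⟨hp, hgp.symm⟩⟩

theorem inf'_toLex_s9 [LinearOrder α] [LinearOrder β] (s : Finset γ) (hs : s.Nonempty)
    (g : γ → α) (h : γ → β) :
    s.inf' hs (fun p => toLex (g p, h p)) =
      toLex (s.inf' hs g, (s.filter fun p => g p = s.inf' hs g).inf'
        (filter_eq_inf'_nonempty s hs g) h) := by
  obtain ⟨p₀, hp₀, hκp₀⟩ := s.exists_mem_eq_inf' hs fun p => toLex (g p, h p)
  have hle : ∀ p ∈ s, toLex (g p₀, h p₀) ≤ toLex (g p, h p) := fun p hp =>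
    hκp₀ ▸ inf'_le _ hp
  have hg : s.inf' hs g = g p₀ :=
    le_antisymm (inf'_le g hp₀) <| le_inf' _ _ fun p hp =>
      Prod.Lex.monotone_fst _ _ (hle p hp)
  rw [hκp₀, toLex_inj, Prod.mk.injEq]
  refine ⟨hg.symm, le_antisymm (le_inf' _ _ fun p hp => ?_)
    (inf'_le h (mem_filter.2 ⟨hp₀, hg.symm⟩))⟩
  obtain ⟨hps, hgp⟩ := mem_filter.1 hp
  rw [hg] at hgp
  simpa [hgp, Prod.Lex.toLex_le_toLex] using hle p hps

theorem sup'_toLex_s9 [LinearOrder α] [LinearOrder β] (s : Finset γ) (hs : s.Nonempty)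
    (g : γ → α) (h : γ → β) :
    s.sup' hs (fun p => toLex (g p, h p)) =
      toLex (s.sup' hs g, (s.filter fun p => g p = s.sup' hs g).sup'
        (filter_eq_sup'_nonempty s hs g) h) := by
  obtain ⟨p₀, hp₀, hκp₀⟩ := s.exists_mem_eq_sup' hs fun p => toLex (g p, h p)
  have hle : ∀ p ∈ s, toLex (g p, h p) ≤ toLex (g p₀, h p₀) := fun p hp =>
    hκp₀ ▸ le_sup' (fun p => toLex (g p, h p)) hp
  have hg : s.sup' hs g = g p₀ :=
    le_antisymm (sup'_le _ _ fun p hp => Prod.Lex.monotone_fst _ _ (hle p hp))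
      (le_sup' g hp₀)
  rw [hκp₀, toLex_inj, Prod.mk.injEq]
  refine ⟨hg.symm, le_antisymm (le_sup' h (mem_filter.2 ⟨hp₀, hg.symm⟩))
    (sup'_le _ _ fun p hp => ?_)⟩
  obtain ⟨hps, hgp⟩ := mem_filter.1 hp
  rw [hg] at hgp
  simpa [hgp, Prod.Lex.toLex_le_toLex] using hle p hps

theorem sum_powerset_neg_one_pow_mul_inf'_union {R : Type*} [DecidableEq γ] [LinearOrder α]
    [Ring R] (κ : γ → α) (f : α → R) {B W : Finset γ} (hW : W.Nonempty) {b₀ : γ}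
    (hb₀ : b₀ ∈ B) (hmax : ∀ b ∈ B, κ b ≤ κ b₀) :
    ∑ S ∈ B.powerset, (-1 : R) ^ S.card * f ((S ∪ W).inf' (hW.mono subset_union_right) κ) =
      f (W.inf' hW κ) - f (min (κ b₀) (W.inf' hW κ)) := by
  have hinsert : ∀ S : Finset γ, (insert b₀ S ∪ W).inf' (hW.mono subset_union_right) κ =
      min (κ b₀) ((S ∪ W).inf' (hW.mono subset_union_right) κ) := fun S => by
    simp only [insert_union]
    exact inf'_insert _ κ
  have hcancel : ∀ S ⊆ B.erase b₀, S.Nonempty →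
      (insert b₀ S ∪ W).inf' (hW.mono subset_union_right) κ =
        (S ∪ W).inf' (hW.mono subset_union_right) κ := by
    rintro S hS ⟨b, hb⟩
    rw [hinsert, min_eq_right]
    exact (inf'_le κ (mem_union_left W hb)).trans (hmax b (mem_of_mem_erase (hS hb)))
  rw [← insert_erase hb₀, sum_powerset_insert (notMem_erase b₀ B), ← sum_add_distrib,
    sum_eq_single ∅]
  · rw [hinsert]
    simp [sub_eq_add_neg]
  · intro S hS hne
    rw [mem_powerset] at hS
    rw [card_insert_of_notMem fun h => notMem_erase b₀ B (hS h),
      hcancel S hS (nonempty_iff_ne_empty.2 hne), pow_succ, mul_neg_one, neg_mul, add_neg_cancel]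
  · exact fun h => absurd (empty_mem_powerset _) h

end Finset

theorem Prod.Lex.sub_snd_min_toLex_trichotomy {α β : Type*} [LinearOrder α] [AddCommGroup β]
    [LinearOrder β] [IsOrderedAddMonoid β] (a₁ c₁ : α) (a₂ c₂ : β) :
    (a₁ < c₁ →
      c₂ - (ofLex (min (toLex (a₁, a₂)) (toLex (c₁, c₂)))).2 = c₂ - a₂) ∧
    (c₁ < a₁ →
      c₂ - (ofLex (min (toLex (a₁, a₂)) (toLex (c₁, c₂)))).2 = 0) ∧
    (a₁ = c₁ →
      c₂ - (ofLex (min (toLex (a₁, a₂)) (toLex (c₁, c₂)))).2 = max 0 (c₂ - a₂)) := by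
  refine ⟨fun h => ?_, fun h => ?_, fun h => ?_⟩
  · rw [min_eq_left (toLex_le_toLex.2 (Or.inl h))]
    rfl
  · rw [min_eq_right (toLex_le_toLex.2 (Or.inl h))]
    exact sub_self c₂
  · subst h
    have hmin : min (toLex (a₁, a₂)) (toLex (a₁, c₂)) = toLex (a₁, min a₂ c₂) :=
      (Monotone.map_min (f := fun b => toLex (a₁, b)) fun _ _ h =>
        toLex_mono (Prod.mk_le_mk_iff_right.2 h)).symm
    rw [hmin, ofLex_toLex, ← max_sub_sub_left, sub_self, max_comm]

theorem minOnMinimizers_eq_snd_inf'_toLex {d : ℕ} (u : EuclideanSpace ℝ (Fin d))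
    (q : EuclideanSpace ℝ (Fin d) → ℝ) (P : Finset (EuclideanSpace ℝ (Fin d)))
    (hP : P.Nonempty) :
    minOnMinimizers u q P hP = (ofLex (P.inf' hP fun p => toLex (inner ℝ p u, q p))).2 := by
  rw [inf'_toLex_s9]
  rfl

/-- Trichotomy for the alternating sum `∑_{S ⊆ B} (−1)^{|S|} m_q(S ∪ W)`:
it equals `m_q(W) − M_q(B)` if `max_{b∈B}⟨b,u⟩ < min_{w∈W}⟨w,u⟩`, it equals `0`
if `max_{b∈B}⟨b,u⟩ > min_{w∈W}⟨w,u⟩`, and it equals `(m_q(W) − M_q(B))⁺` if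
`max_{b∈B}⟨b,u⟩ = min_{w∈W}⟨w,u⟩`. -/
theorem alternating_sum_trichotomy (d : ℕ)
    [DecidableEq (EuclideanSpace ℝ (Fin d))]
    (B W : Finset (EuclideanSpace ℝ (Fin d))) (hB : B.Nonempty) (hW : W.Nonempty)
    (u : EuclideanSpace ℝ (Fin d)) (q : EuclideanSpace ℝ (Fin d) → ℝ) :
    (B.sup' hB (fun b => (inner ℝ b u : ℝ)) < W.inf' hW (fun w => (inner ℝ w u : ℝ)) →
      (∑ S ∈ B.powerset,
          (-1 : ℝ) ^ S.card *
            minOnMinimizers u q (S ∪ W) (hW.mono Finset.subset_union_right)) =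
        minOnMinimizers u q W hW - maxOnMaximizers u q B hB) ∧
    (W.inf' hW (fun w => (inner ℝ w u : ℝ)) < B.sup' hB (fun b => (inner ℝ b u : ℝ)) →
      (∑ S ∈ B.powerset,
          (-1 : ℝ) ^ S.card *
            minOnMinimizers u q (S ∪ W) (hW.mono Finset.subset_union_right)) = 0) ∧
    (B.sup' hB (fun b => (inner ℝ b u : ℝ)) = W.inf' hW (fun w => (inner ℝ w u : ℝ)) →
      (∑ S ∈ B.powerset,
          (-1 : ℝ) ^ S.card *
            minOnMinimizers u q (S ∪ W) (hW.mono Finset.subset_union_right)) =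
        max 0 (minOnMinimizers u q W hW - maxOnMaximizers u q B hB)) := by
  obtain ⟨b₀, hb₀, hκb₀⟩ := B.exists_mem_eq_sup' hB fun p => toLex (inner ℝ p u, q p)
  have hsum : ∑ S ∈ B.powerset, (-1 : ℝ) ^ S.card *
        minOnMinimizers u q (S ∪ W) (hW.mono subset_union_right) =
      (ofLex (W.inf' hW fun p => toLex (inner ℝ p u, q p))).2 -
        (ofLex (min (toLex (inner ℝ b₀ u, q b₀))
          (W.inf' hW fun p => toLex (inner ℝ p u, q p)))).2 := by
    simp only [minOnMinimizers_eq_snd_inf'_toLex]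
    exact sum_powerset_neg_one_pow_mul_inf'_union _ (fun x => (ofLex x).2) hW hb₀
      fun b hb => hκb₀ ▸ le_sup' (fun p => toLex (inner ℝ p u, q p)) hb
  rw [hsum, minOnMinimizers_eq_snd_inf'_toLex, ← hκb₀, inf'_toLex_s9, sup'_toLex_s9]
  exact Prod.Lex.sub_snd_min_toLex_trichotomy _ _ _ _
end
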